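/- Define Φ : [0,1] → ℝ by Φ(x) = 4x² sin(π/(4x²)) for x ∈ (0,1/2], Φ(x) = −4(1−x)² sin(π/(4(1−x)²)) for x ∈ (1/2,1), and Φ(0) = Φ(1) = 0. For each k ∈ ℕ let I_k = [2^{−(k+1)}, 2^{−k}] and define Φ_{I_k} : [0,1] → ℝ by Φ_{I_k}(x) = Φ(2^{k+1}x − 1) for x ∈ I_k and Φ_{I_k}(x) = 0 otherwise. Suppose F : [0,1] → ℝ is a uniform limit of finite linear combinations of the functions Φ_{I_k} (so F is differentiable at every point of (0,1]). Then the function g : [0,1] → ℝ defined by g(0) = 0 and g(x) = F′(x) for x ∈ (0,1] is Henstock–Kurzweil integrable on [0,1], with integral equal to F(1) − F(0). -/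

import Mathlib

open Set Filter Topology

/-- `Φ(x) = 4x² sin(π/(4x²))` on `(0,1/2]`, `Φ(x) = −4(1−x)² sin(π/(4(1−x)²))` on
`(1/2,1)`, and `Φ = 0` at `0`, `1` (and outside `[0,1]`). -/
noncomputable def Phi (x : ℝ) : ℝ :=
  if x ≤ 0 then 0
  else if x ≤ 1 / 2 then 4 * x ^ 2 * Real.sin (Real.pi / (4 * x ^ 2))
  else if x < 1 then -(4 * (1 - x) ^ 2 * Real.sin (Real.pi / (4 * (1 - x) ^ 2)))
  else 0

/-- `Φ_{I_k}` where `I_k = [2^{-(k+1)}, 2^{-k}]`: it equals `Φ(2^{k+1}x − 1)` on `I_k`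
and `0` elsewhere. -/
noncomputable def PhiIk (k : ℕ) (x : ℝ) : ℝ :=
  if ((2 : ℝ) ^ (k + 1))⁻¹ ≤ x then
    if x ≤ ((2 : ℝ) ^ k)⁻¹ then Phi (2 ^ (k + 1) * x - 1) else 0
  else 0

/-- Henstock–Kurzweil integrability of `g` on `[a,b]` with integral `I`: for every
`ε > 0` there is a gauge `δ : [a,b] → (0,∞)` such that every `δ`-fine tagged partition
of `[a,b]` has Riemann sum within `ε` of `I`. -/
def HKIntegrableOn (g : ℝ → ℝ) (a b I : ℝ) : Prop :=
  ∀ ε : ℝ, 0 < ε → ∃ δ : ℝ → ℝ, (∀ t, 0 < δ t) ∧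
    ∀ (n : ℕ) (x tg : ℕ → ℝ), 0 < n →
      x 0 = a → x n = b →
      (∀ i, i < n → x i < x (i + 1)) →
      (∀ i, i < n → tg i ∈ Set.Icc (x i) (x (i + 1))) →
      (∀ i, i < n → Set.Icc (x i) (x (i + 1)) ⊆
        Set.Ioo (tg i - δ (tg i)) (tg i + δ (tg i))) →
      |(∑ i ∈ Finset.range n, g (tg i) * (x (i + 1) - x i)) - I| < ε

/-- If `F` is a uniform limit on `[0,1]` of finite linear combinations of the `Φ_{I_k}`
(so `F` is differentiable on `(0,1]`), and `g` is defined by `g 0 = 0` and `g x = F' x`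
for `x ∈ (0,1]`, then `g` is Henstock–Kurzweil integrable on `[0,1]` with integral
`F(1) − F(0)`. -/
theorem stmt18 (F g : ℝ → ℝ)
    (hF : ∃ (c : ℕ → ℕ → ℝ) (s : ℕ → Finset ℕ),
      TendstoUniformlyOn (fun n x => ∑ k ∈ s n, c n k * PhiIk k x) F
        Filter.atTop (Set.Icc 0 1))
    (hg0 : g 0 = 0)
    (hg : ∀ x ∈ Set.Ioc (0 : ℝ) 1, HasDerivWithinAt F (g x) (Set.Icc 0 1) x) :
    HKIntegrableOn g 0 1 (F 1 - F 0) := by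
  intro ε hε
  obtain ⟨c, s, htu⟩ := hF
  rw [Metric.tendstoUniformlyOn_iff] at htu
  obtain ⟨N, hN⟩ := (htu (ε/8) (by positivity)).exists
  set M := (s N).sup id with hM
  set δ0 : ℝ := ((2:ℝ)^(M+1))⁻¹ with hδ0def
  have hδ0 : (0:ℝ) < δ0 := by positivity
  have hf0 : ∀ y : ℝ, y < δ0 → (∑ k ∈ s N, c N k * PhiIk k y) = 0 := by
    intro y hy
    apply Finset.sum_eq_zero
    intro k hk
    have hkM : k ≤ M := Finset.le_sup (f := id) hk
    have h2 : y < ((2:ℝ)^(k+1))⁻¹ := lt_of_lt_of_le hy (by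
      apply inv_anti₀ (by positivity)
      exact pow_le_pow_right₀ one_le_two (by omega))
    rw [PhiIk, if_neg (not_le.2 h2), mul_zero]
  have hcont : ∀ y ∈ Icc (0:ℝ) 1, y < δ0 → |F y - F 0| ≤ ε/4 := by
    intro y hy hyδ
    have h1 := hN y hy
    have h2 := hN 0 (by constructor <;> norm_num)
    simp only [hf0 y hyδ, hf0 0 hδ0, Real.dist_eq, sub_zero] at h1 h2
    calc |F y - F 0| ≤ |F y| + |F 0| := abs_sub _ _
      _ ≤ ε/8 + ε/8 := add_le_add h1.le h2.le
      _ = ε/4 := by ring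
  have hder : ∀ t ∈ Ioc (0:ℝ) 1, ∃ d, 0 < d ∧ ∀ y ∈ Icc (0:ℝ) 1,
      |y - t| < d → |F y - F t - g t * (y - t)| ≤ ε/4 * |y - t| := by
    intro t ht
    have h := (hasDerivWithinAt_iff_isLittleO.mp (hg t ht)).def
      (show (0:ℝ) < ε/4 by positivity)
    obtain ⟨d, hd, hsub⟩ := Metric.mem_nhdsWithin_iff.mp h
    refine ⟨d, hd, fun y hy hyd => ?_⟩
    have : y ∈ Metric.ball t d ∩ Icc (0:ℝ) 1 :=
      ⟨by rwa [Metric.mem_ball, Real.dist_eq], hy⟩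
    have := hsub this
    simpa [Real.norm_eq_abs, smul_eq_mul, mul_comm] using this
  choose d hd hdspec using hder
  refine ⟨fun t => if h : t ∈ Ioc (0:ℝ) 1 then d t h else δ0, fun t => ?_, ?_⟩
  · dsimp only; split
    · exact hd _ _
    · exact hδ0
  intro n x tg hn hx0 hxn hxlt htag hfine
  have hmono : ∀ j, j ≤ n → ∀ i, i ≤ j → x i ≤ x j := by
    intro j
    induction j with
    | zero => intro _ i hi; obtain rfl := Nat.le_zero.mp hi; exact le_rfl
    | succ j ih =>
      intro hjn i hi
      rcases Nat.eq_or_lt_of_le hi with h | h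
      · exact h ▸ le_rfl
      · exact le_trans (ih (le_trans (Nat.le_succ j) hjn) i (Nat.lt_succ_iff.mp h))
          (le_of_lt (hxlt j hjn))
  have key : ∀ i, i < n →
      |g (tg i) * (x (i+1) - x i) - (F (x (i+1)) - F (x i))| ≤
        ε/4 * (x (i+1) - x i) + (if i = 0 then ε/4 else 0) := by
    intro i hi
    have hin : i + 1 ≤ n := hi
    have hxi0 : (0:ℝ) ≤ x i := by rw [← hx0]; exact hmono i (le_of_lt hi) 0 (Nat.zero_le i)
    have hxi1 : x (i+1) ≤ 1 := by rw [← hxn]; exact hmono n le_rfl (i+1) hin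
    have hΔpos : x i < x (i+1) := hxlt i hi
    have hxi10 : (0:ℝ) ≤ x (i+1) := le_trans hxi0 hΔpos.le
    have hti := htag i hi
    rcases eq_or_lt_of_le (le_trans hxi0 hti.1) with h0 | h0
    · -- tag is 0
      have hi0 : i = 0 := by
        by_contra hne
        have h1n : 1 ≤ i := Nat.one_le_iff_ne_zero.mpr hne
        have : x 1 ≤ x i := hmono i (le_of_lt hi) 1 h1n
        have hx01 : x 0 < x 1 := hxlt 0 hn
        rw [hx0] at hx01
        have : (0:ℝ) < x i := lt_of_lt_of_le hx01 this
        rw [← h0] at hti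
        linarith [hti.1]
      subst hi0
      have hxeq : x 0 = 0 := hx0
      have htg0 : tg 0 = 0 := h0.symm
      have hmem : x 1 ∈ Icc (x 0) (x 1) := ⟨hΔpos.le, le_rfl⟩
      have hIoo := hfine 0 hn hmem
      rw [htg0] at hIoo
      have hnotin : (0:ℝ) ∉ Ioc (0:ℝ) 1 := by simp
      simp only [dif_neg hnotin] at hIoo
      have hx1δ : x 1 < δ0 := by linarith [hIoo.2]
      have hb := hcont (x 1) ⟨hxi10, hxi1⟩ hx1δ
      rw [htg0, hg0, zero_mul, zero_sub, abs_neg, if_pos rfl]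
      simp only [Nat.zero_add] at *
      rw [hxeq]
      have hnn : (0:ℝ) ≤ ε/4 * (x 1 - 0) :=
        mul_nonneg (by linarith) (by linarith)
      linarith
    · -- tag is positive
      have ht : tg i ∈ Ioc (0:ℝ) 1 := ⟨h0, le_trans hti.2 hxi1⟩
      have hIoo1 := hfine i hi ⟨le_rfl, hΔpos.le⟩
      have hIoo2 := hfine i hi ⟨hΔpos.le, le_rfl⟩
      simp only [dif_pos ht] at hIoo1 hIoo2
      have hA := hdspec (tg i) ht (x (i+1)) ⟨hxi10, hxi1⟩
        (by rw [abs_lt]; constructor <;> [linarith [hIoo2.1]; linarith [hIoo2.2]])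
      have hB := hdspec (tg i) ht (x i) ⟨hxi0, le_trans hΔpos.le hxi1⟩
        (by rw [abs_lt]; constructor <;> [linarith [hIoo1.1]; linarith [hIoo1.2]])
      have habs1 : |x (i+1) - tg i| = x (i+1) - tg i := abs_of_nonneg (by linarith [hti.2])
      have habs2 : |x i - tg i| = tg i - x i := by
        rw [abs_sub_comm]; exact abs_of_nonneg (by linarith [hti.1])
      rw [habs1] at hA
      rw [habs2] at hB
      have hsplit : g (tg i) * (x (i+1) - x i) - (F (x (i+1)) - F (x i)) =
          -((F (x (i+1)) - F (tg i) - g (tg i) * (x (i+1) - tg i)) -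
            (F (x i) - F (tg i) - g (tg i) * (x i - tg i))) := by ring
      rw [hsplit, abs_neg]
      have hite : (0:ℝ) ≤ if i = 0 then ε/4 else 0 := by split <;> linarith
      calc |(F (x (i+1)) - F (tg i) - g (tg i) * (x (i+1) - tg i)) -
            (F (x i) - F (tg i) - g (tg i) * (x i - tg i))|
          ≤ |F (x (i+1)) - F (tg i) - g (tg i) * (x (i+1) - tg i)| +
            |F (x i) - F (tg i) - g (tg i) * (x i - tg i)| := abs_sub _ _
        _ ≤ ε/4 * (x (i+1) - tg i) + ε/4 * (tg i - x i) := add_le_add hA hB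
        _ = ε/4 * (x (i+1) - x i) := by ring
        _ ≤ ε/4 * (x (i+1) - x i) + (if i = 0 then ε/4 else 0) := le_add_of_nonneg_right hite
  have sumF : ∑ i ∈ Finset.range n, (F (x (i+1)) - F (x i)) = F 1 - F 0 := by
    have h := Finset.sum_range_sub (fun i => F (x i)) n
    rw [h, hxn, hx0]
  have sumΔ : ∑ i ∈ Finset.range n, (x (i+1) - x i) = 1 := by
    have h := Finset.sum_range_sub x n
    rw [h, hxn, hx0]; ring
  calc |(∑ i ∈ Finset.range n, g (tg i) * (x (i + 1) - x i)) - (F 1 - F 0)|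
      = |∑ i ∈ Finset.range n,
          (g (tg i) * (x (i+1) - x i) - (F (x (i+1)) - F (x i)))| := by
        rw [Finset.sum_sub_distrib, sumF]
    _ ≤ ∑ i ∈ Finset.range n,
          |g (tg i) * (x (i+1) - x i) - (F (x (i+1)) - F (x i))| :=
        Finset.abs_sum_le_sum_abs _ _
    _ ≤ ∑ i ∈ Finset.range n,
          (ε/4 * (x (i+1) - x i) + (if i = 0 then ε/4 else 0)) :=
        Finset.sum_le_sum (fun i hi => key i (Finset.mem_range.mp hi))
    _ = ε/4 * 1 + ε/4 := by
        rw [Finset.sum_add_distrib, ← Finset.mul_sum, sumΔ,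
          Finset.sum_ite_eq' (Finset.range n) 0 (fun _ => ε/4),
          if_pos (Finset.mem_range.mpr hn)]
    _ < ε := by linarith
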